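/- arXiv:2106.16112 — 7 statements merged into one kernel-verified Lean document; each statement's English description precedes it below -/
import Mathlib

section
/- Existence of a small (j,k,d)-family: for positive integers j, k, d with j + k ≤ d, there exists a family I of subsets of {1,...,d} with |I| ≤ ⌈2 * ((j+k)^(j+k+1) / (j^j * k^k)) * log d⌉ such that for every pair of disjoint subsets J, K of {1,...,d} with |J| = j and |K| = k, there exists I ∈ I with I ∩ J = ∅ and K ⊆ I. -/
/-!
Pick `t` independent random subsets of `[d]`, each containing every element independently with
probability `p = k / (j + k)`. A fixed pair `(J, K)` is served by one such subset with probability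
`q = p ^ k (1 - p) ^ j = j ^ j k ^ k / (j + k) ^ (j + k)`, so it is missed by all of them with
probability `(1 - q) ^ t ≤ exp (-q t)`. There are at most `d ^ (j + k)` pairs, and the choice of
`t` makes `d ^ (j + k) exp (-q t) < 1`, so by the union bound some outcome serves every pair.
-/

open Finset

section Cover

variable {α β : Type*} [Fintype α]

/-- Union bound for `t` independent samples from the distribution `w`: the `t`-th power in `h` is
the probability that all samples fail to be `good` for `p`. -/
theorem exists_cover_of_sum_pow_lt_one (w : α → ℝ) (hw0 : ∀ a, 0 ≤ w a) (hw1 : ∑ a, w a = 1)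
    (good : α → β → Prop) [∀ a b, Decidable (good a b)] (P : Finset β) (t : ℕ)
    (h : ∑ p ∈ P, (∑ a with ¬good a p, w a) ^ t < 1) :
    ∃ 𝓘 : Finset α, #𝓘 ≤ t ∧ ∀ p ∈ P, ∃ a ∈ 𝓘, good a p := by
  classical
  have htotal : ∑ f : Fin t → α, ∏ i, w (f i) = 1 := by
    rw [← Fintype.sum_pow, hw1, one_pow]
  have hexpect : ∑ f : Fin t → α, (∏ i, w (f i)) * #{p ∈ P | ∀ i, ¬good (f i) p} =
      ∑ p ∈ P, (∑ a with ¬good a p, w a) ^ t := by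
    calc _ = ∑ f : Fin t → α, ∑ p ∈ P, ∏ i, (if ¬good (f i) p then w (f i) else 0) := by
          refine sum_congr rfl fun f _ => ?_
          simp only [Fintype.prod_ite_zero, card_filter, Nat.cast_sum, mul_sum]
          refine sum_congr rfl fun p _ => ?_
          split_ifs <;> simp
      _ = ∑ p ∈ P, (∑ a, if ¬good a p then w a else 0) ^ t := by
          rw [sum_comm]
          simp only [Fintype.sum_pow]
      _ = _ := by simp only [sum_ite, sum_const_zero, add_zero]
  obtain ⟨f, -, hf⟩ := exists_lt_of_sum_lt (hexpect ▸ htotal ▸ h :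
    ∑ f : Fin t → α, (∏ i, w (f i)) * #{p ∈ P | ∀ i, ¬good (f i) p} <
      ∑ f : Fin t → α, ∏ i, w (f i))
  have huncovered : #{p ∈ P | ∀ i, ¬good (f i) p} = 0 := by
    by_contra hne
    have : (1 : ℝ) ≤ #{p ∈ P | ∀ i, ¬good (f i) p} := by
      exact_mod_cast Nat.one_le_iff_ne_zero.mpr hne
    nlinarith [prod_nonneg fun i (_ : i ∈ univ) => hw0 (f i)]
  refine ⟨univ.image f, card_image_le.trans (by simp), fun p hp => ?_⟩
  simp only [card_eq_zero, filter_eq_empty_iff, not_forall, not_not] at huncovered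
  obtain ⟨i, hi⟩ := huncovered hp
  exact ⟨f i, mem_image_of_mem f (mem_univ i), hi⟩

end Cover

section Bernoulli

variable {α : Type*} [Fintype α] [DecidableEq α]

theorem sum_prod_ite_mem {R : Type*} [CommSemiring R] (f g : α → R) :
    ∑ I : Finset α, ∏ x, (if x ∈ I then f x else g x) = ∏ x, (f x + g x) := by
  rw [Fintype.prod_add]
  refine sum_congr rfl fun I _ => ?_
  rw [prod_ite, filter_mem_eq_inter, univ_inter, filter_notMem_eq_sdiff, compl_eq_univ_sdiff]

/-- The probability that a random subset of `α`, containing each element independently with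
probability `p`, equals `I`. -/
def bernoulliWeight (p : ℝ) (I : Finset α) : ℝ :=
  ∏ x, if x ∈ I then p else 1 - p

theorem bernoulliWeight_nonneg {p : ℝ} (hp0 : 0 ≤ p) (hp1 : p ≤ 1) (I : Finset α) :
    0 ≤ bernoulliWeight p I :=
  prod_nonneg fun x _ => by split_ifs <;> linarith

theorem sum_bernoulliWeight (p : ℝ) : ∑ I, bernoulliWeight p (α := α) I = 1 := by
  simp [bernoulliWeight, sum_prod_ite_mem]

theorem sum_bernoulliWeight_disjoint_subset (p : ℝ) {J K : Finset α} (hJK : Disjoint J K) :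
    ∑ I with Disjoint I J ∧ K ⊆ I, bernoulliWeight p I = p ^ #K * (1 - p) ^ #J := by
  -- Zeroing `p` on `J` and `1 - p` on `K` kills exactly the weights of the unwanted `I`.
  have hweight : ∀ I : Finset α, (if Disjoint I J ∧ K ⊆ I then bernoulliWeight p I else 0) =
      ∏ x, if x ∈ I then (if x ∈ J then 0 else p) else (if x ∈ K then 0 else 1 - p) := by
    intro I
    split_ifs with hI
    · refine prod_congr rfl fun x _ => ?_
      by_cases hxI : x ∈ I
      · simp [hxI, disjoint_left.mp hI.1 hxI]
      · simp [hxI, mt (@hI.2 x) hxI]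
    · rw [not_and_or, not_disjoint_iff, not_subset] at hI
      rcases hI with ⟨x, hxI, hxJ⟩ | ⟨x, hxK, hxI⟩
      · exact (prod_eq_zero (mem_univ x) (by simp [hxI, hxJ])).symm
      · exact (prod_eq_zero (mem_univ x) (by simp [hxI, hxK])).symm
  rw [sum_filter, sum_congr rfl fun I _ => hweight I, sum_prod_ite_mem]
  calc _ = ∏ x, (if x ∈ K then p else 1) * (if x ∈ J then 1 - p else 1) := by
        refine prod_congr rfl fun x _ => ?_
        by_cases hxJ : x ∈ J
        · simp [hxJ, disjoint_left.mp hJK hxJ]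
        · by_cases hxK : x ∈ K <;> simp [hxJ, hxK]
    _ = _ := by
        rw [prod_mul_distrib, prod_ite_mem, prod_ite_mem, univ_inter, univ_inter, prod_const,
          prod_const]

theorem sum_bernoulliWeight_not_disjoint_subset (p : ℝ) {J K : Finset α} (hJK : Disjoint J K) :
    ∑ I with ¬(Disjoint I J ∧ K ⊆ I), bernoulliWeight p I = 1 - p ^ #K * (1 - p) ^ #J := by
  rw [eq_sub_iff_add_eq', ← sum_bernoulliWeight_disjoint_subset p hJK,
    sum_filter_add_sum_filter_not, sum_bernoulliWeight]

end Bernoulli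

theorem pow_mul_one_sub_pow_le_one {p : ℝ} (hp0 : 0 ≤ p) (hp1 : p ≤ 1) (m n : ℕ) :
    p ^ m * (1 - p) ^ n ≤ 1 :=
  mul_le_one₀ (pow_le_one₀ hp0 hp1) (pow_nonneg (sub_nonneg.mpr hp1) n)
    (pow_le_one₀ (sub_nonneg.mpr hp1) (by linarith))

theorem pow_mul_one_sub_pow_lt_one {x q : ℝ} {n t : ℕ} (hx : 0 < x) (hq : q ≤ 1)
    (h : n * Real.log x < q * t) : x ^ n * (1 - q) ^ t < 1 := by
  have hxn : x ^ n = Real.exp (n * Real.log x) := by rw [Real.exp_nat_mul, Real.exp_log hx]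
  have hqt : (1 - q) ^ t ≤ Real.exp (-(q * t)) := by
    rw [show -(q * t) = t * -q by ring, Real.exp_nat_mul]
    exact pow_le_pow_left₀ (sub_nonneg.mpr hq) (Real.one_sub_le_exp_neg q) t
  calc x ^ n * (1 - q) ^ t ≤ Real.exp (n * Real.log x) * Real.exp (-(q * t)) := by
        rw [hxn]; gcongr
    _ < 1 := by
        rw [← Real.exp_add, Real.exp_lt_one_iff]; linarith

theorem cast_add_mul_log_lt_mul_ceil {j k d : ℕ} (hj : 1 ≤ j) (hk : 1 ≤ k) (hd : j + k ≤ d) :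
    ((j + k : ℕ) : ℝ) * Real.log d < ((k : ℝ) / (j + k)) ^ k * (1 - k / (j + k)) ^ j *
      ⌈2 * (((j + k : ℝ)) ^ (j + k + 1) / ((j : ℝ) ^ j * (k : ℝ) ^ k)) * Real.log d⌉₊ := by
  have hj0 : (0 : ℝ) < j := by exact_mod_cast hj
  have hk0 : (0 : ℝ) < k := by exact_mod_cast hk
  have hlog : 0 < Real.log d := Real.log_pos (by exact_mod_cast (by omega : 1 < d))
  have hq : ((k : ℝ) / (j + k)) ^ k * (1 - k / (j + k)) ^ j =
      (j : ℝ) ^ j * (k : ℝ) ^ k / (j + k) ^ (j + k) := by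
    rw [one_sub_div (by positivity), add_sub_cancel_right, div_pow, div_pow, pow_add]
    field_simp
  have hscale : ((j + k : ℝ)) ^ (j + k + 1) / ((j : ℝ) ^ j * (k : ℝ) ^ k) *
      ((j : ℝ) ^ j * (k : ℝ) ^ k / (j + k) ^ (j + k)) = j + k := by
    field_simp; ring
  rw [hq]
  calc ((j + k : ℕ) : ℝ) * Real.log d < 2 * (j + k) * Real.log d := by push_cast; nlinarith
    _ = 2 * (((j + k : ℝ)) ^ (j + k + 1) / ((j : ℝ) ^ j * (k : ℝ) ^ k) *
        ((j : ℝ) ^ j * (k : ℝ) ^ k / (j + k) ^ (j + k))) * Real.log d := by rw [hscale]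
    _ = (j : ℝ) ^ j * (k : ℝ) ^ k / (j + k) ^ (j + k) *
        (2 * (((j + k : ℝ)) ^ (j + k + 1) / ((j : ℝ) ^ j * (k : ℝ) ^ k)) * Real.log d) := by ring
    _ ≤ _ := by gcongr; exact Nat.le_ceil _

theorem card_disjoint_pairs_le (d j k : ℕ) :
    #((powersetCard j (univ : Finset (Fin d)) ×ˢ powersetCard k univ).filter
      fun JK => Disjoint JK.1 JK.2) ≤ d ^ (j + k) := by
  calc _ ≤ #(powersetCard j (univ : Finset (Fin d)) ×ˢ powersetCard k univ) := card_filter_le _ _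
    _ = d.choose j * d.choose k := by simp
    _ ≤ d ^ j * d ^ k := Nat.mul_le_mul (Nat.choose_le_pow _ _) (Nat.choose_le_pow _ _)
    _ = d ^ (j + k) := (pow_add _ _ _).symm

theorem stmt2 (j k d : ℕ) (hj : 1 ≤ j) (hk : 1 ≤ k) (hd : j + k ≤ d) :
    ∃ 𝓘 : Finset (Finset (Fin d)),
      𝓘.card ≤ ⌈2 * (((j + k : ℝ)) ^ (j + k + 1) / ((j : ℝ) ^ j * (k : ℝ) ^ k)) *
        Real.log d⌉₊ ∧
      ∀ J K : Finset (Fin d), Disjoint J K → J.card = j → K.card = k →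
        ∃ I ∈ 𝓘, Disjoint I J ∧ K ⊆ I := by
  set p : ℝ := k / (j + k)
  have hp0 : 0 ≤ p := by positivity
  have hp1 : p ≤ 1 := div_le_one_of_le₀ (by simp) (by positivity)
  set P := (powersetCard j (univ : Finset (Fin d)) ×ˢ powersetCard k univ).filter
    fun JK => Disjoint JK.1 JK.2
  have hmiss : ∀ JK ∈ P,
      ∑ I with ¬(Disjoint I JK.1 ∧ JK.2 ⊆ I), bernoulliWeight p I = 1 - p ^ k * (1 - p) ^ j := by
    intro JK hJK
    simp only [P, mem_filter, mem_product, mem_powersetCard] at hJK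
    rw [sum_bernoulliWeight_not_disjoint_subset p hJK.2, hJK.1.1.2, hJK.1.2.2]
  obtain ⟨𝓘, hcard, hcover⟩ := exists_cover_of_sum_pow_lt_one (bernoulliWeight p)
    (bernoulliWeight_nonneg hp0 hp1) (sum_bernoulliWeight p)
    (fun I JK => Disjoint I JK.1 ∧ JK.2 ⊆ I) P _ <| by
      rw [sum_congr rfl fun JK hJK => by rw [hmiss JK hJK], sum_const, nsmul_eq_mul]
      have hq1 := pow_mul_one_sub_pow_le_one hp0 hp1 k j
      calc (#P : ℝ) * (1 - p ^ k * (1 - p) ^ j) ^ _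
          ≤ (d : ℝ) ^ (j + k) * (1 - p ^ k * (1 - p) ^ j) ^ _ := by
            gcongr
            exact_mod_cast card_disjoint_pairs_le d j k
        _ < 1 := pow_mul_one_sub_pow_lt_one (by norm_cast; omega) hq1
            (cast_add_mul_log_lt_mul_ceil hj hk hd)
  refine ⟨𝓘, hcard, fun J K hJK hJ hK => hcover (J, K) ?_⟩
  simp [P, hJK, hJ, hK]
end

section
/- Approximate Gonzalez yields a k-center coreset: let (M, dist) be a metric space, A ⊆ M a finite set, c ≥ 1, and let B = {b_0, b_1, ..., b_k} ⊆ A be constructed greedily so that for each i ∈ {1,...,k}, the point b_i satisfies c · dist(b_i, {b_0,...,b_{i-1}}) ≥ max_{a ∈ A} dist(a, {b_0,...,b_{i-1}}). Then for every set C ⊆ M with |C| = k, max_{a ∈ A} dist(a, C) ≤ (1 + 2c) · max_{b ∈ B} dist(b, C). -/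
/-!
Let `r` be the covering radius of `B = {b₀, …, b_k}` by the `k` centers `C`. Two points
`bᵢ, bⱼ` with `i < j` share a nearest center, so `dist(bⱼ, {b₀, …, b_{j-1}}) ≤ dist(bⱼ, bᵢ) ≤ 2r`.
By the greedy choice of `bⱼ`, every `a ∈ A` is within `2cr` of some `bₘ` with `m < j`, and
`bₘ` is within `r` of `C`.
-/

open Metric

section

variable {M : Type*} [MetricSpace M]

theorem Metric.exists_lt_dist_le_two_mul_of_card_lt {ι : Type*} [LinearOrder ι] [Fintype ι]
    {b : ι → M} {C : Finset M} (hC : C.Nonempty) (hcard : C.card < Fintype.card ι) {r : ℝ}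
    (hr : ∀ i, infDist (b i) C ≤ r) : ∃ i j, i < j ∧ dist (b i) (b j) ≤ 2 * r := by
  have nearest : ∀ i, ∃ t ∈ C, infDist (b i) C = dist (b i) t := fun i =>
    C.finite_toSet.isCompact.exists_infDist_eq_dist (by exact_mod_cast hC) (b i)
  choose t htC hdist using nearest
  have shared : ∀ i j, t i = t j → dist (b i) (b j) ≤ 2 * r := fun i j h =>
    calc dist (b i) (b j) ≤ dist (b i) (t i) + dist (b j) (t j) := h ▸ dist_triangle_right _ _ _
      _ ≤ r + r := add_le_add (hdist i ▸ hr i) (hdist j ▸ hr j)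
      _ = 2 * r := by ring
  obtain ⟨i, j, hne, hij⟩ :=
    Fintype.exists_ne_map_eq_of_card_lt (fun i => (⟨t i, htC i⟩ : C)) (by simpa using hcard)
  have htij : t i = t j := congrArg Subtype.val hij
  rcases hne.lt_or_gt with h | h
  · exact ⟨i, j, h, shared i j htij⟩
  · exact ⟨j, i, h, shared j i htij.symm⟩

theorem Metric.infDist_le_infDist_add_of_forall_infDist_le {S T : Set M} (hS : S.Nonempty)
    {r : ℝ} (h : ∀ s ∈ S, infDist s T ≤ r) (x : M) : infDist x T ≤ infDist x S + r := by
  have : infDist x T - r ≤ infDist x S := (le_infDist hS).2 fun s hs => by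
    linarith [infDist_le_infDist_add_dist (x := x) (y := s) (s := T), h s hs]
  linarith

end

theorem stmt5_general {M : Type*} [MetricSpace M] (k : ℕ) (A : Finset M) (hA : A.Nonempty)
    (c : ℝ) (hc : 1 ≤ c) (b : Fin (k + 1) → M)
    (hgreedy : ∀ i : Fin (k + 1), 0 < i.val → ∀ a ∈ A,
      Metric.infDist a (b '' {m | m < i}) ≤ c * Metric.infDist (b i) (b '' {m | m < i}))
    (C : Finset M) (hC : C.Nonempty) (hCk : C.card = k) :
    A.sup' hA (fun a => Metric.infDist a (C : Set M)) ≤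
      (1 + 2 * c) *
        (Finset.univ.sup' Finset.univ_nonempty
          fun i : Fin (k + 1) => Metric.infDist (b i) (C : Set M)) := by
  set r := Finset.univ.sup' Finset.univ_nonempty
    fun i : Fin (k + 1) => infDist (b i) (C : Set M)
  have hr : ∀ i, infDist (b i) C ≤ r := fun i =>
    Finset.le_sup' (fun i : Fin (k + 1) => infDist (b i) (C : Set M)) (Finset.mem_univ i)
  obtain ⟨i, j, hij, hdist⟩ := exists_lt_dist_le_two_mul_of_card_lt hC (by simp [hCk]) hr
  have hbi : b i ∈ b '' {m | m < j} := Set.mem_image_of_mem b hij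
  have hbj : infDist (b j) (b '' {m | m < j}) ≤ 2 * r :=
    (infDist_le_dist_of_mem hbi).trans (dist_comm (b i) (b j) ▸ hdist)
  have hprefix : ∀ s ∈ b '' {m | m < j}, infDist s C ≤ r := by
    rintro _ ⟨m, -, rfl⟩
    exact hr m
  refine Finset.sup'_le _ _ fun a ha => ?_
  calc infDist a C ≤ infDist a (b '' {m | m < j}) + r :=
        infDist_le_infDist_add_of_forall_infDist_le ⟨_, hbi⟩ hprefix a
    _ ≤ c * (2 * r) + r := by
        gcongr
        exact (hgreedy j ((Nat.zero_le _).trans_lt hij) a ha).trans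
          (mul_le_mul_of_nonneg_left hbj (by linarith))
    _ = (1 + 2 * c) * r := by ring

theorem stmt5 {M : Type*} [MetricSpace M] (k : ℕ) (A : Finset M) (hA : A.Nonempty)
    (c : ℝ) (hc : 1 ≤ c) (b : Fin (k + 1) → M) (hb : ∀ i, b i ∈ A)
    (hgreedy : ∀ i : Fin (k + 1), 0 < i.val → ∀ a ∈ A,
      Metric.infDist a (b '' {m | m < i}) ≤ c * Metric.infDist (b i) (b '' {m | m < i}))
    (C : Finset M) (hC : C.Nonempty) (hCk : C.card = k) :
    A.sup' hA (fun a => Metric.infDist a (C : Set M)) ≤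
      (1 + 2 * c) *
        (Finset.univ.sup' Finset.univ_nonempty
          fun i : Fin (k + 1) => Metric.infDist (b i) (C : Set M)) :=
  stmt5_general k A hA c hc b hgreedy C hC hCk
end

section
/- Union of restricted k-center coresets: let P be the set of points in (ℝ ∪ {?})^d with at most j missing coordinates, X ⊆ P finite, and let I be a (j,k,d)-family of subsets of [d]. Suppose for each I ∈ I, Y_I ⊆ {x ∈ X : I ⊆ I_x} satisfies: for every finite C ⊆ ℝ^d with |C| = k, max over x ∈ X with I ⊆ I_x of dist_I(x,C) ≤ α · max_{y ∈ Y_I} dist_I(y,C). Then Y = ∪_I Y_I satisfies: for every C ⊆ ℝ^d with |C| = k, max_{x ∈ X} dist(x, C) ≤ α√d · max_{y ∈ Y} dist(y, C). -/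
/-
Fix `x` and `C`. For each centre `c` pick a coordinate `g c ∈ I_x` where `x` and `c`
differ most; then `dist(x, c) ≤ √d · |x_{g c} - c_{g c}|`. The missing coordinates of `x` (at most
`j`) and the `≤ k` chosen coordinates `g(C)` are disjoint, so padding them to sizes `j` and `k`
and applying the family property gives `I ∈ 𝓘` avoiding every missing coordinate of `x` and
containing `g(C)`. Hence `dist(x, C) ≤ √d · dist_I(x, C)`, and the coreset property of `Y_I`
together with `dist_I ≤ dist` on `Y_I` finishes the proof.
-/

/-- The set of available (non-missing) coordinates of a point with missing values. -/
noncomputable def avail {d : ℕ} (x : Fin d → Option ℝ) : Finset (Fin d) :=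
  Finset.univ.filter (fun i => x i ≠ none)

/-- The `I`-induced distance between a point with missing values and an ordinary point. -/
noncomputable def distOn {d : ℕ} (I : Finset (Fin d)) (x : Fin d → Option ℝ)
    (c : Fin d → ℝ) : ℝ :=
  Real.sqrt (∑ i ∈ I, ((x i).getD 0 - c i) ^ 2)

open Finset

section OrderedSemiring

variable {R : Type*} [Semiring R] [LinearOrder R] [IsOrderedRing R]

lemma Finset.exists_mem_sum_le_card_mul {ι : Type*} {A : Finset ι} (hA : A.Nonempty)
    (f : ι → R) : ∃ i ∈ A, ∑ i' ∈ A, f i' ≤ #A * f i := by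
  obtain ⟨i, hi, hmax⟩ := A.exists_max_image f hA
  exact ⟨i, hi, by simpa only [nsmul_eq_mul] using A.sum_le_card_nsmul f (f i) hmax⟩

lemma Finset.exists_subset_card_le_forall_sum_le {ι γ : Type*} (A : Finset ι) (C : Finset γ)
    (f : γ → ι → R) (hf : ∀ c i, 0 ≤ f c i) :
    ∃ K ⊆ A, #K ≤ #C ∧ ∀ c ∈ C, ∑ i ∈ A, f c i ≤ #A * ∑ i ∈ K, f c i := by
  classical
  rcases A.eq_empty_or_nonempty with rfl | hA
  · exact ⟨∅, subset_rfl, by simp, fun c _ => by simp⟩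
  choose g hgA hg using fun c => exists_mem_sum_le_card_mul hA (f c)
  refine ⟨C.image g, fun i hi => ?_, card_image_le, fun c hc => (hg c).trans ?_⟩
  · obtain ⟨c, -, rfl⟩ := mem_image.mp hi
    exact hgA c
  · gcongr
    exact single_le_sum (fun i _ => hf c i) (mem_image_of_mem g hc)

end OrderedSemiring

lemma Finset.exists_disjoint_supersets_card_eq {α : Type*} [Fintype α] [DecidableEq α]
    {M L : Finset α} {j k : ℕ} (hML : Disjoint M L) (hM : #M ≤ j) (hL : #L ≤ k)
    (hjk : j + k ≤ Fintype.card α) :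
    ∃ J K : Finset α, M ⊆ J ∧ L ⊆ K ∧ Disjoint J K ∧ #J = j ∧ #K = k := by
  obtain ⟨J, hMJ, hJL, hJ⟩ := exists_subsuperset_card_eq
    (subset_compl_iff_disjoint_right.mpr hML) hM (by rw [card_compl]; omega)
  obtain ⟨K, hLK, hKJ, hK⟩ := exists_subsuperset_card_eq
    (subset_compl_iff_disjoint_right.mpr (subset_compl_iff_disjoint_right.mp hJL).symm) hL
    (by rw [card_compl]; omega)
  exact ⟨J, K, hMJ, hLK, (subset_compl_iff_disjoint_right.mp hKJ).symm, hJ, hK⟩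

lemma Finset.inf'_le_mul_inf' {γ β : Type*} [LinearOrder β] [Mul β] {s : Finset γ}
    (hs : s.Nonempty) {f g : γ → β} {a : β}
    (h : ∀ c ∈ s, f c ≤ a * g c) : s.inf' hs f ≤ a * s.inf' hs g := by
  obtain ⟨c, hc, hgc⟩ := s.exists_mem_eq_inf' hs g
  rw [hgc]
  exact (inf'_le f hc).trans (h c hc)

lemma distOn_mono {d : ℕ} {I J : Finset (Fin d)} (h : I ⊆ J) (x : Fin d → Option ℝ)
    (c : Fin d → ℝ) : distOn I x c ≤ distOn J x c :=
  Real.sqrt_le_sqrt (sum_le_sum_of_subset_of_nonneg h fun _ _ _ => sq_nonneg _)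

lemma exists_subset_avail_card_le_distOn_le {d : ℕ} (x : Fin d → Option ℝ)
    (C : Finset (Fin d → ℝ)) :
    ∃ K ⊆ avail x, #K ≤ #C ∧ ∀ I, K ⊆ I → ∀ c ∈ C,
      distOn (avail x) x c ≤ Real.sqrt d * distOn I x c := by
  obtain ⟨K, hKA, hKC, hsum⟩ := exists_subset_card_le_forall_sum_le (avail x) C
    (fun c i => ((x i).getD 0 - c i) ^ 2) fun _ _ => sq_nonneg _
  refine ⟨K, hKA, hKC, fun I hKI c hc => ?_⟩
  have hA : (#(avail x) : ℝ) ≤ d := by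
    exact_mod_cast (card_le_univ _).trans_eq (Fintype.card_fin d)
  rw [distOn, distOn, ← Real.sqrt_mul (Nat.cast_nonneg d)]
  refine Real.sqrt_le_sqrt ((hsum c hc).trans ?_)
  gcongr

theorem stmt8_general (d j k : ℕ) (hd : j + k ≤ d)
    (α : ℝ) (hα : 0 ≤ α)
    (X : Finset (Fin d → Option ℝ)) (hX : ∀ x ∈ X, d - j ≤ (avail x).card)
    (𝓘 : Finset (Finset (Fin d)))
    (hfam : ∀ J K : Finset (Fin d), Disjoint J K → J.card = j → K.card = k →
      ∃ I ∈ 𝓘, Disjoint I J ∧ K ⊆ I)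
    (Y : Finset (Fin d) → Finset (Fin d → Option ℝ))
    (hYsub : ∀ I ∈ 𝓘, ∀ y ∈ Y I, y ∈ X ∧ I ⊆ avail y)
    (hcore : ∀ I ∈ 𝓘, ∀ C : Finset (Fin d → ℝ), ∀ hCne : C.Nonempty, C.card = k →
      ∀ x ∈ X, I ⊆ avail x →
        ∃ y ∈ Y I, C.inf' hCne (fun c => distOn I x c) ≤
          α * C.inf' hCne (fun c => distOn I y c))
    (C : Finset (Fin d → ℝ)) (hC : C.Nonempty) (hCk : C.card = k)
    (x : Fin d → Option ℝ) (hx : x ∈ X) :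
    ∃ y ∈ 𝓘.biUnion Y,
      C.inf' hC (fun c => distOn (avail x) x c) ≤
        α * Real.sqrt d * C.inf' hC (fun c => distOn (avail y) y c) := by
  obtain ⟨L, hLA, hLC, hdist⟩ := exists_subset_avail_card_le_distOn_le x C
  have hmissing : #(avail x)ᶜ ≤ j := by
    rw [card_compl, Fintype.card_fin]; have := hX x hx; omega
  obtain ⟨J, K, hcomplJ, hLK, hJK, hJ, hK⟩ := exists_disjoint_supersets_card_eq
    (disjoint_compl_left.mono_right hLA) hmissing (hCk ▸ hLC) (by rwa [Fintype.card_fin])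
  obtain ⟨I, hI, hIJ, hKI⟩ := hfam J K hJK hJ hK
  obtain ⟨y, hyY, hy⟩ := hcore I hI C hC hCk x hx
    (disjoint_compl_right_iff.mp (hIJ.mono_right hcomplJ))
  refine ⟨y, mem_biUnion.mpr ⟨I, hI, hyY⟩, ?_⟩
  calc C.inf' hC (fun c => distOn (avail x) x c)
      ≤ Real.sqrt d * C.inf' hC (fun c => distOn I x c) :=
        inf'_le_mul_inf' hC (hdist I (hLK.trans hKI))
    _ ≤ Real.sqrt d * (α * C.inf' hC (fun c => distOn (avail y) y c)) := by
        gcongr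
        exact hy.trans (mul_le_mul_of_nonneg_left
          (inf'_mono_fun fun c _ => distOn_mono (hYsub I hI y hyY).2 y c) hα)
    _ = α * Real.sqrt d * C.inf' hC (fun c => distOn (avail y) y c) := by ring

theorem stmt8 (d j k : ℕ) (hj : 1 ≤ j) (hk : 1 ≤ k) (hd : j + k ≤ d)
    (α : ℝ) (hα : 0 ≤ α)
    (X : Finset (Fin d → Option ℝ)) (hX : ∀ x ∈ X, d - j ≤ (avail x).card)
    (𝓘 : Finset (Finset (Fin d)))
    (hfam : ∀ J K : Finset (Fin d), Disjoint J K → J.card = j → K.card = k →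
      ∃ I ∈ 𝓘, Disjoint I J ∧ K ⊆ I)
    (Y : Finset (Fin d) → Finset (Fin d → Option ℝ))
    (hYsub : ∀ I ∈ 𝓘, ∀ y ∈ Y I, y ∈ X ∧ I ⊆ avail y)
    (hcore : ∀ I ∈ 𝓘, ∀ C : Finset (Fin d → ℝ), ∀ hCne : C.Nonempty, C.card = k →
      ∀ x ∈ X, I ⊆ avail x →
        ∃ y ∈ Y I, C.inf' hCne (fun c => distOn I x c) ≤
          α * C.inf' hCne (fun c => distOn I y c))
    (C : Finset (Fin d → ℝ)) (hC : C.Nonempty) (hCk : C.card = k)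
    (x : Fin d → Option ℝ) (hx : x ∈ X) :
    ∃ y ∈ 𝓘.biUnion Y,
      C.inf' hC (fun c => distOn (avail x) x c) ≤
        α * Real.sqrt d * C.inf' hC (fun c => distOn (avail y) y c) :=
  stmt8_general d j k hd α hα X hX 𝓘 hfam Y hYsub hcore C hC hCk x hx
end

section
/- Lower bound instance for coresets with missing values: let d = 2j and let P = {p(I) : I ⊆ [d], |I| = j} where p(I) has coordinate 1 on indices in I and missing (?) elsewhere. Then any weighted subset D ⊆ P that is a (1/2)-coreset for k-means with missing values with k = j must contain every point of P, i.e., D = P. -/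
/-- The point with coordinate 1 on indices in `I` and missing elsewhere. -/
def pI {d : ℕ} (I : Finset (Fin d)) : Fin d → Option ℝ :=
  fun i => if i ∈ I then some 1 else none

/-- Squared distance (evaluated only on available coordinates) between a point with
missing values and an ordinary point. -/
noncomputable def mcost2 {d : ℕ} (x : Fin d → Option ℝ) (c : Fin d → ℝ) : ℝ :=
  ∑ i ∈ Finset.univ.filter (fun i => x i ≠ none), ((x i).getD 0 - c i) ^ 2

/-!
Suppose `p(I) ∉ D`. Take as centers the `j` points `zeroAt i` (`i ∈ I`), with `0` in coordinate
`i` and `1` elsewhere. A point `p(I')` sees only the coordinates in `I'`, where it equals `1`, so its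
distance to `zeroAt i` is `1` if `i ∈ I'` and `0` otherwise; its distance to the set of centers is
therefore `1` if `I ⊆ I'` and `0` otherwise. Among sets of size `j` only `I' = I` has `I ⊆ I'`,
so the clustering costs `1` on `P`, but `0` on any weighting of `D`, contradicting the
`1/2`-coreset property.
-/

open Finset

variable {d : ℕ}

lemma pI_injective : Function.Injective (pI (d := d)) := by
  intro I I' h
  ext i
  have hi := congrFun h i
  simp only [pI] at hi
  split_ifs at hi <;> simp_all

lemma filter_pI_ne_none (I : Finset (Fin d)) : univ.filter (fun i => pI I i ≠ none) = I := by
  ext i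
  by_cases hi : i ∈ I <;> simp [pI, hi]

def zeroAt (i : Fin d) : Fin d → ℝ := fun i' => if i' = i then 0 else 1

lemma zeroAt_injective : Function.Injective (zeroAt (d := d)) := by
  intro a b h
  by_contra hab
  simpa [zeroAt, hab] using congrFun h a

lemma mcost2_pI_zeroAt (I : Finset (Fin d)) (i : Fin d) :
    mcost2 (pI I) (zeroAt i) = if i ∈ I then 1 else 0 := by
  have hterm : ∀ i' ∈ I, ((pI I i').getD 0 - zeroAt i i') ^ 2 = if i' = i then 1 else 0 := by
    intro i' hi'
    simp only [pI, if_pos hi', Option.getD_some, zeroAt]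
    split_ifs <;> norm_num
  rw [mcost2, filter_pI_ne_none, sum_congr rfl hterm, sum_ite_eq']

lemma inf'_mcost2_pI_image_zeroAt {I : Finset (Fin d)} (hI : (I.image zeroAt).Nonempty)
    (I' : Finset (Fin d)) :
    (I.image zeroAt).inf' hI (fun c => mcost2 (pI I') c) = if I ⊆ I' then 1 else 0 := by
  simp only [inf'_image, Function.comp_def, mcost2_pI_zeroAt]
  split_ifs with hsub
  · exact inf'_eq_of_forall _ _ fun i hi => if_pos (hsub hi)
  · obtain ⟨i, hiI, hiI'⟩ := not_subset.mp hsub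
    refine le_antisymm ((inf'_le _ hiI).trans_eq (if_neg hiI')) (le_inf' _ _ fun i' _ => ?_)
    split_ifs <;> norm_num

lemma inf'_mcost2_pI_image_zeroAt_of_card_eq {I I' : Finset (Fin d)}
    (hI : (I.image zeroAt).Nonempty) (hcard : I'.card = I.card) :
    (I.image zeroAt).inf' hI (fun c => mcost2 (pI I') c) = if I' = I then 1 else 0 := by
  rw [inf'_mcost2_pI_image_zeroAt]
  exact if_congr ⟨fun h => (eq_of_subset_of_card_le h hcard.le).symm, fun h => h ▸ subset_rfl⟩
    rfl rfl

lemma sum_image_pI_inf'_mcost2_image_zeroAt {j : ℕ} {I : Finset (Fin d)} (hIj : I.card = j)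
    (hI : (I.image zeroAt).Nonempty) :
    ∑ x ∈ (powersetCard j (univ : Finset (Fin d))).image pI,
      (I.image zeroAt).inf' hI (fun c => mcost2 x c) = 1 := by
  rw [sum_image fun _ _ _ _ h => pI_injective h]
  rw [sum_congr rfl fun I' hI' => inf'_mcost2_pI_image_zeroAt_of_card_eq hI
    ((mem_powersetCard.mp hI').2.trans hIj.symm)]
  rw [sum_ite_eq', if_pos (mem_powersetCard.mpr ⟨subset_univ I, hIj⟩)]

lemma sum_mul_inf'_mcost2_image_zeroAt_eq_zero {j : ℕ} {I : Finset (Fin d)} (hIj : I.card = j)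
    (hI : (I.image zeroAt).Nonempty) {D : Finset (Fin d → Option ℝ)}
    (hD : D ⊆ (powersetCard j (univ : Finset (Fin d))).image pI) (hID : pI I ∉ D)
    (w : (Fin d → Option ℝ) → ℝ) :
    ∑ x ∈ D, w x * (I.image zeroAt).inf' hI (fun c => mcost2 x c) = 0 := by
  refine sum_eq_zero fun x hx => ?_
  obtain ⟨I', hI', rfl⟩ := mem_image.mp (hD hx)
  have hne : I' ≠ I := fun h => hID (h ▸ hx)
  rw [inf'_mcost2_pI_image_zeroAt_of_card_eq hI ((mem_powersetCard.mp hI').2.trans hIj.symm),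
    if_neg hne, mul_zero]

theorem stmt14_general (j : ℕ) (hj : 1 ≤ j)
    (D : Finset (Fin (2 * j) → Option ℝ)) (w : (Fin (2 * j) → Option ℝ) → ℝ)
    (hD : D ⊆ (Finset.powersetCard j (Finset.univ : Finset (Fin (2 * j)))).image pI)
    (hcore : ∀ C : Finset (Fin (2 * j) → ℝ), ∀ hC : C.Nonempty, C.card = j →
      |(∑ x ∈ D, w x * C.inf' hC (fun c => mcost2 x c)) -
        ∑ x ∈ (Finset.powersetCard j (Finset.univ : Finset (Fin (2 * j)))).image pI,
          C.inf' hC (fun c => mcost2 x c)| ≤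
      (1 / 2) * ∑ x ∈ (Finset.powersetCard j (Finset.univ : Finset (Fin (2 * j)))).image pI,
          C.inf' hC (fun c => mcost2 x c)) :
    D = (Finset.powersetCard j (Finset.univ : Finset (Fin (2 * j)))).image pI := by
  refine hD.antisymm fun x hx => ?_
  by_contra hxD
  obtain ⟨I, hI, rfl⟩ := mem_image.mp hx
  have hIj : I.card = j := (mem_powersetCard.mp hI).2
  have hC : (I.image zeroAt).Nonempty := (card_pos.mp (by omega)).image _
  have hcost := hcore _ hC (by rw [card_image_of_injective _ zeroAt_injective, hIj])
  rw [sum_image_pI_inf'_mcost2_image_zeroAt hIj hC,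
    sum_mul_inf'_mcost2_image_zeroAt_eq_zero hIj hC hD hxD] at hcost
  norm_num at hcost

theorem stmt14 (j : ℕ) (hj : 1 ≤ j)
    (D : Finset (Fin (2 * j) → Option ℝ)) (w : (Fin (2 * j) → Option ℝ) → ℝ)
    (hD : D ⊆ (Finset.powersetCard j (Finset.univ : Finset (Fin (2 * j)))).image pI)
    (hw : ∀ x ∈ D, 0 ≤ w x)
    (hcore : ∀ C : Finset (Fin (2 * j) → ℝ), ∀ hC : C.Nonempty, C.card = j →
      |(∑ x ∈ D, w x * C.inf' hC (fun c => mcost2 x c)) -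
        ∑ x ∈ (Finset.powersetCard j (Finset.univ : Finset (Fin (2 * j)))).image pI,
          C.inf' hC (fun c => mcost2 x c)| ≤
      (1 / 2) * ∑ x ∈ (Finset.powersetCard j (Finset.univ : Finset (Fin (2 * j)))).image pI,
          C.inf' hC (fun c => mcost2 x c)) :
    D = (Finset.powersetCard j (Finset.univ : Finset (Fin (2 * j)))).image pI :=
  stmt14_general j hj D w hD hcore
end

section
/- In the lower bound instance: for distinct j-element subsets I, I' of [d] with d = 2j, and centers C = {c^i : i ∈ I} where c^i ∈ ℝ^d has 0 in coordinate i and 1 in all other coordinates, the point p(I') (equal to 1 on I' and missing elsewhere) satisfies dist(p(I'), C) = 0, while p(I) satisfies dist(p(I), C) = 1. -/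
lemma mcost2_pI {d : ℕ} (S : Finset (Fin d)) (c : Fin d → ℝ) :
    mcost2 (pI S) c = ∑ t ∈ S, (1 - c t) ^ 2 := by
  have hobserved : Finset.univ.filter (fun i => pI S i ≠ none) = S := by
    ext i
    by_cases hi : i ∈ S <;> simp [pI, hi]
  rw [mcost2, hobserved]
  exact Finset.sum_congr rfl fun i hi => by simp [pI, hi]

def center {d : ℕ} (i : Fin d) : Fin d → ℝ :=
  fun t => if t = i then 0 else 1

lemma mcost2_pI_center_of_notMem {d : ℕ} {S : Finset (Fin d)} {i : Fin d} (hi : i ∉ S) :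
    mcost2 (pI S) (center i) = 0 := by
  rw [mcost2_pI]
  refine Finset.sum_eq_zero fun t ht => ?_
  have hti : t ≠ i := fun h => hi (h ▸ ht)
  simp [center, hti]

lemma mcost2_pI_center_of_mem {d : ℕ} {S : Finset (Fin d)} {i : Fin d} (hi : i ∈ S) :
    mcost2 (pI S) (center i) = 1 := by
  rw [mcost2_pI]
  calc ∑ t ∈ S, (1 - center i t) ^ 2 = ∑ t ∈ S, if t = i then (1 : ℝ) else 0 :=
        Finset.sum_congr rfl fun t _ => by by_cases h : t = i <;> simp [center, h]
    _ = 1 := by rw [Finset.sum_ite_eq', if_pos hi]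

lemma Finset.exists_mem_notMem_of_card_eq_of_ne {α : Type*} {s t : Finset α}
    (hcard : s.card = t.card) (hne : s ≠ t) : ∃ e ∈ s, e ∉ t := by
  by_contra! hsub
  exact hne (Finset.eq_of_subset_of_card_le hsub hcard.ge)

lemma inf'_sqrt_mcost2_pI_center_of_card_eq_of_ne {d : ℕ} {I I' : Finset (Fin d)}
    (hcard : I.card = I'.card) (hne : I ≠ I') (hC : (I.image center).Nonempty) :
    (I.image center).inf' hC (fun c => Real.sqrt (mcost2 (pI I') c)) = 0 := by
  obtain ⟨i', hi'I, hi'I'⟩ := Finset.exists_mem_notMem_of_card_eq_of_ne hcard hne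
  refine le_antisymm ?_ (Finset.le_inf' _ _ fun _ _ => Real.sqrt_nonneg _)
  refine Finset.inf'_le_of_le _ (Finset.mem_image_of_mem center hi'I) ?_
  rw [mcost2_pI_center_of_notMem hi'I', Real.sqrt_zero]

lemma inf'_sqrt_mcost2_pI_center_self {d : ℕ} (I : Finset (Fin d))
    (hC : (I.image center).Nonempty) :
    (I.image center).inf' hC (fun c => Real.sqrt (mcost2 (pI I) c)) = 1 := by
  have hdist : ∀ c ∈ I.image center, Real.sqrt (mcost2 (pI I) c) = 1 := by
    simp only [Finset.mem_image]
    rintro _ ⟨i, hi, rfl⟩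
    rw [mcost2_pI_center_of_mem hi, Real.sqrt_one]
  rw [Finset.inf'_congr hC rfl hdist, Finset.inf'_const]

theorem stmt15_general (j : ℕ) (I I' : Finset (Fin (2 * j)))
    (hI : I.card = j) (hI' : I'.card = j) (hne : I ≠ I')
    (hCne : (I.image (fun i => fun t => if t = i then (0 : ℝ) else 1)).Nonempty) :
    (I.image fun i => fun t => if t = i then (0 : ℝ) else 1).inf' hCne
        (fun c => Real.sqrt (mcost2 (pI I') c)) = 0 ∧
    (I.image fun i => fun t => if t = i then (0 : ℝ) else 1).inf' hCne
        (fun c => Real.sqrt (mcost2 (pI I) c)) = 1 :=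
  ⟨inf'_sqrt_mcost2_pI_center_of_card_eq_of_ne (hI.trans hI'.symm) hne hCne,
    inf'_sqrt_mcost2_pI_center_self I hCne⟩

theorem stmt15 (j : ℕ) (hj : 1 ≤ j) (I I' : Finset (Fin (2 * j)))
    (hI : I.card = j) (hI' : I'.card = j) (hne : I ≠ I')
    (hCne : (I.image (fun i => fun t => if t = i then (0 : ℝ) else 1)).Nonempty) :
    (I.image fun i => fun t => if t = i then (0 : ℝ) else 1).inf' hCne
        (fun c => Real.sqrt (mcost2 (pI I') c)) = 0 ∧
    (I.image fun i => fun t => if t = i then (0 : ℝ) else 1).inf' hCne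
        (fun c => Real.sqrt (mcost2 (pI I) c)) = 1 :=
  stmt15_general j I I' hI hI' hne hCne
end

section
/- Ball membership as a halfspace condition: for any weight function v : ℝ_?^d → ℝ_{>0}, any point h ∈ ℝ_?^d with non-missing coordinate set I_h, any center c ∈ ℝ^d and radius r ≥ 0, the condition v(h)·dist(h,c) ≤ r is equivalent to ⟨f(h), g(c,r)⟩ ≤ 0 where f(h) ∈ ℝ^{3d+1} is the vector ((v(h)²h_i²·𝟙[i∈I_h])_i, (v(h)²·𝟙[i∈I_h])_i, (-2v(h)²h_i·𝟙[i∈I_h])_i, -1) and g(c,r) = ((1)_i, (c_i²)_i, (c_i)_i, r²). -/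
open Finset

lemma mul_sqrt_le_iff_sq_mul_le {a r : ℝ} (S : ℝ) (ha : 0 ≤ a) (hr : 0 ≤ r) :
    a * √S ≤ r ↔ a ^ 2 * S ≤ r ^ 2 := by
  have hsqrt : a * √S = √(a ^ 2 * S) := by rw [Real.sqrt_mul (sq_nonneg a), Real.sqrt_sq ha]
  rw [hsqrt, Real.sqrt_le_left hr]

lemma weighted_halfspace_sum_eq {ι : Type*} [Fintype ι] (w : ℝ) (h : ι → Option ℝ)
    (c : ι → ℝ) (r : ℝ) :
    (∑ i, (if h i ≠ none then w ^ 2 * ((h i).getD 0) ^ 2 else 0) * 1) +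
        (∑ i, (if h i ≠ none then w ^ 2 else 0) * (c i) ^ 2) +
        (∑ i, (if h i ≠ none then -2 * w ^ 2 * (h i).getD 0 else 0) * c i) +
        (-1) * r ^ 2 =
      w ^ 2 * ∑ i ∈ univ.filter (fun i => h i ≠ none), ((h i).getD 0 - c i) ^ 2 - r ^ 2 := by
  have coord (i : ι) :
      (if h i ≠ none then w ^ 2 * ((h i).getD 0) ^ 2 else 0) * 1 +
          (if h i ≠ none then w ^ 2 else 0) * (c i) ^ 2 +
          (if h i ≠ none then -2 * w ^ 2 * (h i).getD 0 else 0) * c i =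
        w ^ 2 * if h i ≠ none then ((h i).getD 0 - c i) ^ 2 else 0 := by
    split_ifs <;> ring
  rw [← sum_add_distrib, ← sum_add_distrib, sum_congr rfl fun i _ => coord i, ← mul_sum,
    sum_filter]
  ring

theorem stmt16 (d : ℕ) (v : (Fin d → Option ℝ) → ℝ) (h : Fin d → Option ℝ)
    (hv : 0 < v h) (c : Fin d → ℝ) (r : ℝ) (hr : 0 ≤ r) :
    v h * Real.sqrt (∑ i ∈ Finset.univ.filter (fun i => h i ≠ none),
        ((h i).getD 0 - c i) ^ 2) ≤ r ↔
      (∑ i : Fin d, (if h i ≠ none then (v h) ^ 2 * ((h i).getD 0) ^ 2 else 0) * 1) +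
        (∑ i : Fin d, (if h i ≠ none then (v h) ^ 2 else 0) * (c i) ^ 2) +
        (∑ i : Fin d, (if h i ≠ none then -2 * (v h) ^ 2 * (h i).getD 0 else 0) * c i) +
        (-1) * r ^ 2 ≤ 0 := by
  rw [weighted_halfspace_sum_eq, sub_nonpos, mul_sqrt_le_iff_sq_mul_le _ hv.le hr]
end

section
/- If for every a, b in a finite set X ⊆ ℝ^m we have |⟨a - b, w⟩| ≤ L·‖a-b‖₂, and x ∈ X satisfies |⟨x - c, w⟩| ≥ ℓ·‖x - c‖₂ for all c in a finite set Q ⊆ X, where x is the furthest point of X from Q, then any point p ∈ X maximizing dist(⟨p,w⟩, ⟨Q,w⟩) := min_{c∈Q}|⟨p-c,w⟩| satisfies dist(p, Q) ≥ (ℓ/L)·dist(x, Q). -/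
/-- Euclidean distance between two points of `ℝ^m`. -/
noncomputable def enorm' {m : ℕ} (a b : Fin m → ℝ) : ℝ :=
  Real.sqrt (∑ i, (a i - b i) ^ 2)

/-- Inner product of the difference `a - b` with a direction `w`. -/
noncomputable def ip' {m : ℕ} (w a b : Fin m → ℝ) : ℝ :=
  ∑ i, (a i - b i) * w i

namespace Finset

variable {α : Type*} {Q : Finset α} (hQ : Q.Nonempty) {f g : α → ℝ}

theorem mul_inf'_le_inf' {ℓ : ℝ} (hℓ : 0 ≤ ℓ) (h : ∀ c ∈ Q, ℓ * g c ≤ f c) :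
    ℓ * Q.inf' hQ g ≤ Q.inf' hQ f :=
  le_inf' hQ f fun c hc =>
    (mul_le_mul_of_nonneg_left (inf'_le g hc) hℓ).trans (h c hc)

theorem inf'_le_mul_inf'_s18 {L : ℝ} (h : ∀ c ∈ Q, f c ≤ L * g c) :
    Q.inf' hQ f ≤ L * Q.inf' hQ g := by
  obtain ⟨c, hc, hgc⟩ := Q.exists_mem_eq_inf' hQ g
  rw [hgc]
  exact (inf'_le f hc).trans (h c hc)

end Finset

theorem stmt18_general (m : ℕ) (w : Fin m → ℝ) (X Q : Finset (Fin m → ℝ)) (hQX : Q ⊆ X)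
    (hQ : Q.Nonempty) (L ℓ : ℝ) (hℓ : 0 < ℓ) (hL : ℓ ≤ L)
    (hproj : ∀ a ∈ X, ∀ b ∈ X, |ip' w a b| ≤ L * enorm' a b)
    (x : Fin m → ℝ) (hx : x ∈ X)
    (hxl : ∀ c ∈ Q, ℓ * enorm' x c ≤ |ip' w x c|)
    (p : Fin m → ℝ) (hp : p ∈ X)
    (hpmax : ∀ q ∈ X, Q.inf' hQ (fun c => |ip' w q c|) ≤ Q.inf' hQ (fun c => |ip' w p c|)) :
    (ℓ / L) * Q.inf' hQ (fun c => enorm' x c) ≤ Q.inf' hQ (fun c => enorm' p c) := by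
  have key : ℓ * Q.inf' hQ (fun c => enorm' x c) ≤ L * Q.inf' hQ (fun c => enorm' p c) :=
    calc ℓ * Q.inf' hQ (fun c => enorm' x c)
        ≤ Q.inf' hQ (fun c => |ip' w x c|) := Finset.mul_inf'_le_inf' hQ hℓ.le hxl
      _ ≤ Q.inf' hQ (fun c => |ip' w p c|) := hpmax x hx
      _ ≤ L * Q.inf' hQ (fun c => enorm' p c) :=
        Finset.inf'_le_mul_inf'_s18 hQ fun c hc => hproj p hp c (hQX hc)
  rw [div_mul_eq_mul_div, div_le_iff₀ (hℓ.trans_le hL)]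
  linarith

theorem stmt18 (m : ℕ) (w : Fin m → ℝ) (X Q : Finset (Fin m → ℝ)) (hQX : Q ⊆ X)
    (hQ : Q.Nonempty) (L ℓ : ℝ) (hℓ : 0 < ℓ) (hL : ℓ ≤ L)
    (hproj : ∀ a ∈ X, ∀ b ∈ X, |ip' w a b| ≤ L * enorm' a b)
    (x : Fin m → ℝ) (hx : x ∈ X)
    (hxl : ∀ c ∈ Q, ℓ * enorm' x c ≤ |ip' w x c|)
    (hxfar : ∀ p ∈ X, Q.inf' hQ (fun c => enorm' p c) ≤ Q.inf' hQ (fun c => enorm' x c))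
    (p : Fin m → ℝ) (hp : p ∈ X)
    (hpmax : ∀ q ∈ X, Q.inf' hQ (fun c => |ip' w q c|) ≤ Q.inf' hQ (fun c => |ip' w p c|)) :
    (ℓ / L) * Q.inf' hQ (fun c => enorm' x c) ≤ Q.inf' hQ (fun c => enorm' p c) :=
  stmt18_general m w X Q hQX hQ L ℓ hℓ hL hproj x hx hxl p hp hpmax
end
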